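/- If a set of full conditional densities f(θⱼ | θ₋ⱼ) for j = 1,...,k coincide with the full conditional densities of some proper joint probability density g(θ₁,...,θ_k), then g is the unique joint density (up to almost-everywhere equality) having these full conditionals, provided g is everywhere positive on a product domain. -/
import Mathlib


open MeasureTheory

namespace JointDensityUniqueAux

/-- A reference probability measure on `ℝ`, absolutely continuous w.r.t. Lebesgue. -/
noncomputable def rho : Measure ℝ := volume.restrict (Set.Ioo (0 : ℝ) 1)

instance : IsProbabilityMeasure rho :=
  ⟨by simp [rho, Real.volume_Ioo]⟩

lemma rho_ac : rho ≪ (volume : Measure ℝ) :=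
  Measure.absolutelyContinuous_of_le Measure.restrict_le_self

/-- A measurable function on `ℝⁿ` which, for each coordinate `j`, is a.e. invariant under
arbitrary updates of coordinate `j`, is a.e. constant. -/
lemma aeConst_of_aeUpdate :
    ∀ (n : ℕ) (u : (Fin n → ℝ) → ℝ), Measurable u →
    (∀ j : Fin n, ∀ᵐ θ : Fin n → ℝ, ∀ t : ℝ, u (Function.update θ j t) = u θ) →
    ∃ c : ℝ, ∀ᵐ θ : Fin n → ℝ, u θ = c := by
  intro n
  induction n with
  | zero =>
    intro u _ _
    exact ⟨u default, Filter.Eventually.of_forall fun θ => by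
      rw [Subsingleton.elim θ default]⟩
  | succ n ih =>
    intro u hu hyp
    set e := MeasurableEquiv.piFinSuccAbove (fun _ : Fin (n + 1) => ℝ) 0 with he
    have mp : MeasurePreserving e (volume : Measure (Fin (n+1) → ℝ))
        ((volume : Measure ℝ).prod (volume : Measure (Fin n → ℝ))) :=
      volume_preserving_piFinSuccAbove (fun _ : Fin (n + 1) => ℝ) 0
    set ub : ℝ × (Fin n → ℝ) → ℝ := fun p => u (e.symm p) with hub_def
    have hub : Measurable ub := hu.comp e.symm.measurable
    have hsymm : ∀ p : ℝ × (Fin n → ℝ), e.symm p = Fin.cons p.1 p.2 := by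
      intro p
      simp [he, MeasurableEquiv.piFinSuccAbove, Fin.insertNth_zero']
      rfl
    have htrans : ∀ j : Fin (n + 1),
        ∀ᵐ p : ℝ × (Fin n → ℝ) ∂((volume : Measure ℝ).prod volume),
          ∀ t : ℝ, u (Function.update (e.symm p) j t) = u (e.symm p) :=
      fun j => (mp.symm e).quasiMeasurePreserving.ae (hyp j)
    -- invariance of ub in the first coordinate
    have h0 : ∀ᵐ p : ℝ × (Fin n → ℝ) ∂((volume : Measure ℝ).prod volume),
        ∀ t : ℝ, ub (t, p.2) = ub p := by
      filter_upwards [htrans 0] with p hp t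
      have h' := hp t
      rw [hsymm p, Fin.update_cons_zero, ← hsymm (t, p.2)] at h'
      show u (e.symm (t, p.2)) = u (e.symm p)
      rw [h', hsymm p]
    set v : (Fin n → ℝ) → ℝ := fun y => ∫ x, ub (x, y) ∂rho with hv_def
    have hv : Measurable v := by
      have : StronglyMeasurable fun y : Fin n → ℝ => ∫ x, ub (x, y) ∂rho := by
        exact ((hub.comp measurable_swap).stronglyMeasurable).integral_prod_right'
      exact this.measurable
    have ha : ∀ᵐ p : ℝ × (Fin n → ℝ) ∂((volume : Measure ℝ).prod volume),
        ub p = v p.2 := by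
      filter_upwards [h0] with p hp
      have : v p.2 = ∫ _x, ub p ∂rho :=
        integral_congr_ae (Filter.Eventually.of_forall fun x => hp x)
      rw [this, integral_const]
      simp
    have hb : ∀ i : Fin n, ∀ᵐ y : Fin n → ℝ,
        ∀ t : ℝ, v (Function.update y i t) = v y := by
      intro i
      have h1 : ∀ᵐ p : ℝ × (Fin n → ℝ) ∂((volume : Measure ℝ).prod volume),
          ∀ t : ℝ, ub (p.1, Function.update p.2 i t) = ub p := by
        filter_upwards [htrans i.succ] with p hp t
        have h' := hp t
        rw [hsymm p, ← Fin.cons_update, ← hsymm (p.1, Function.update p.2 i t)] at h'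
        show u (e.symm (p.1, Function.update p.2 i t)) = u (e.symm p)
        rw [h', hsymm p]
      have hswap : ∀ᵐ q : (Fin n → ℝ) × ℝ ∂((volume : Measure (Fin n → ℝ)).prod volume),
          ∀ t : ℝ, ub (q.2, Function.update q.1 i t) = ub (q.2, q.1) :=
        Measure.measurePreserving_swap.quasiMeasurePreserving.ae h1
      have h2 : ∀ᵐ y : Fin n → ℝ, ∀ᵐ x : ℝ,
          ∀ t : ℝ, ub (x, Function.update y i t) = ub (x, y) :=
        Measure.ae_ae_of_ae_prod hswap
      filter_upwards [h2] with y hy t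
      refine integral_congr_ae ?_
      refine (rho_ac.ae_le ?_ : _)
      filter_upwards [hy] with x hx using hx t
    obtain ⟨c, hc⟩ := ih v hv hb
    have hlift : ∀ᵐ p : ℝ × (Fin n → ℝ) ∂((volume : Measure ℝ).prod volume), v p.2 = c :=
      Measure.quasiMeasurePreserving_snd.ae hc
    have hfinal : ∀ᵐ p : ℝ × (Fin n → ℝ) ∂((volume : Measure ℝ).prod volume), ub p = c := by
      filter_upwards [ha, hlift] with p h₁ h₂
      rw [h₁, h₂]
    refine ⟨c, ?_⟩
    have := mp.quasiMeasurePreserving.ae hfinal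
    filter_upwards [this] with θ hθ
    simpa [hub_def] using hθ

end JointDensityUniqueAux

open JointDensityUniqueAux in
/-- If two everywhere-positive proper joint probability densities `g` and `h` on the product
domain `ℝᵏ` have identical full conditional densities
`g(θ)/∫g(θ₁,...,t,...,θ_k) dt` for every coordinate `j`, then `g = h` almost everywhere:
a proper joint density is uniquely determined (up to a.e. equality) by its full conditionals. -/
theorem joint_density_unique_from_full_conditionals (k : ℕ) (hk : 0 < k)
    (g h : (Fin k → ℝ) → ℝ) (hgmeas : Measurable g) (hhmeas : Measurable h)
    (hgpos : ∀ θ, 0 < g θ) (hhpos : ∀ θ, 0 < h θ)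
    (hgint : Integrable g volume) (hhint : Integrable h volume)
    (hgprob : ∫ θ, g θ = 1) (hhprob : ∫ θ, h θ = 1)
    (hcond : ∀ (j : Fin k) (θ : Fin k → ℝ),
      g θ / (∫ t : ℝ, g (Function.update θ j t))
        = h θ / (∫ t : ℝ, h (Function.update θ j t))) :
    g =ᵐ[volume] h := by
  obtain ⟨n, rfl⟩ : ∃ n, k = n + 1 := ⟨k - 1, (Nat.succ_pred_eq_of_pos hk).symm⟩
  -- a.e. every slice of g is integrable, hence the normalizing constants are nonzero
  have slice : ∀ (f : (Fin (n+1) → ℝ) → ℝ), Measurable f → Integrable f volume →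
      ∀ j : Fin (n + 1), ∀ᵐ θ : Fin (n+1) → ℝ,
        Integrable (fun s : ℝ => f (Function.update θ j s)) volume := by
    intro f hfmeas hfint j
    set e := MeasurableEquiv.piFinSuccAbove (fun _ : Fin (n + 1) => ℝ) j with he
    have mp : MeasurePreserving e (volume : Measure (Fin (n+1) → ℝ))
        ((volume : Measure ℝ).prod (volume : Measure (Fin n → ℝ))) :=
      volume_preserving_piFinSuccAbove (fun _ : Fin (n + 1) => ℝ) j
    have hes : ∀ (θ : Fin (n+1) → ℝ) (s : ℝ),
        e.symm (s, (e θ).2) = Function.update θ j s := by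
      intro θ s
      have h2 : (e θ).2 = Fin.removeNth j θ := rfl
      rw [h2]
      simp only [he, MeasurableEquiv.piFinSuccAbove, MeasurableEquiv.symm_mk,
        MeasurableEquiv.coe_mk, Equiv.symm_symm]
      exact Fin.insertNth_removeNth j s θ
    have hfi : Integrable (fun p : ℝ × (Fin n → ℝ) => f (e.symm p))
        ((volume : Measure ℝ).prod volume) := by
      have := ((mp.symm e).integrable_comp_emb
        (MeasurableEquiv.measurableEmbedding e.symm)).mpr hfint
      exact this
    have hae : ∀ᵐ y : Fin n → ℝ ∂volume,
        Integrable (fun x : ℝ => f (e.symm (x, y))) volume := hfi.prod_left_ae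
    have hae2 : ∀ᵐ p : ℝ × (Fin n → ℝ) ∂((volume : Measure ℝ).prod volume),
        Integrable (fun x : ℝ => f (e.symm (x, p.2))) volume :=
      Measure.quasiMeasurePreserving_snd.ae hae
    have hae3 := mp.quasiMeasurePreserving.ae hae2
    filter_upwards [hae3] with θ hθ
    have : (fun s : ℝ => f (Function.update θ j s))
        = fun x : ℝ => f (e.symm (x, (e θ).2)) := by
      funext s; rw [hes θ s]
    rw [this]
    exact hθ
  have hGne : ∀ j : Fin (n + 1), ∀ᵐ θ : Fin (n+1) → ℝ,
      (∫ s : ℝ, g (Function.update θ j s)) ≠ 0 := by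
    intro j
    filter_upwards [slice g hgmeas hgint j] with θ hθ
    have hpos : 0 < ∫ s : ℝ, g (Function.update θ j s) := by
      rw [integral_pos_iff_support_of_nonneg (fun s => (hgpos _).le) hθ]
      have hsupp : Function.support (fun s : ℝ => g (Function.update θ j s)) = Set.univ :=
        Set.eq_univ_of_forall fun s => (hgpos _).ne'
      rw [hsupp]
      simp
    exact hpos.ne'
  -- the key pointwise invariance of the ratio h/g
  have key : ∀ (j : Fin (n + 1)) (θ : Fin (n+1) → ℝ),
      (∫ s : ℝ, g (Function.update θ j s)) ≠ 0 →
      ∀ t : ℝ, h (Function.update θ j t) / g (Function.update θ j t) = h θ / g θ := by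
    intro j θ hA t
    set A := ∫ s : ℝ, g (Function.update θ j s) with hAdef
    set B := ∫ s : ℝ, h (Function.update θ j s) with hBdef
    have hApos : 0 < A :=
      lt_of_le_of_ne (integral_nonneg fun s => (hgpos _).le) (Ne.symm hA)
    have hcθ := hcond j θ
    rw [← hAdef, ← hBdef] at hcθ
    have hBne : B ≠ 0 := by
      intro h0
      rw [h0, div_zero] at hcθ
      exact absurd hcθ (div_pos (hgpos θ) hApos).ne'
    have hBpos : 0 < B :=
      lt_of_le_of_ne (integral_nonneg fun s => (hhpos _).le) (Ne.symm hBne)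
    have hc1 : g θ * B = h θ * A := by
      rw [div_eq_div_iff hApos.ne' hBpos.ne'] at hcθ
      exact hcθ
    have hcu := hcond j (Function.update θ j t)
    have hAu : (∫ s : ℝ, g (Function.update (Function.update θ j t) j s)) = A := by
      rw [hAdef]; simp [Function.update_idem]
    have hBu : (∫ s : ℝ, h (Function.update (Function.update θ j t) j s)) = B := by
      rw [hBdef]; simp [Function.update_idem]
    rw [hAu, hBu] at hcu
    have hc2 : g (Function.update θ j t) * B = h (Function.update θ j t) * A := by
      rw [div_eq_div_iff hApos.ne' hBpos.ne'] at hcu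
      exact hcu
    rw [div_eq_div_iff (hgpos _).ne' (hgpos _).ne']
    apply mul_right_cancel₀ hApos.ne'
    linear_combination g (Function.update θ j t) * hc1 - g θ * hc2
  have hyp : ∀ j : Fin (n + 1), ∀ᵐ θ : Fin (n+1) → ℝ,
      ∀ t : ℝ, (fun θ => h θ / g θ) (Function.update θ j t) = (fun θ => h θ / g θ) θ := by
    intro j
    filter_upwards [hGne j] with θ hθ t
    exact key j θ hθ t
  obtain ⟨c, hc⟩ := aeConst_of_aeUpdate (n + 1) (fun θ => h θ / g θ)
    (hhmeas.div hgmeas) hyp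
  have hhg : ∀ᵐ θ : Fin (n+1) → ℝ, h θ = c * g θ := by
    filter_upwards [hc] with θ hθ
    rw [div_eq_iff (hgpos θ).ne'] at hθ
    exact hθ
  have hint : (1 : ℝ) = c := by
    have h1 : ∫ θ : Fin (n+1) → ℝ, h θ = ∫ θ : Fin (n+1) → ℝ, c * g θ :=
      integral_congr_ae hhg
    rw [hhprob, integral_const_mul, hgprob, mul_one] at h1
    exact h1
  filter_upwards [hhg] with θ hθ
  rw [hθ, ← hint, one_mul]
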